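/- arXiv:1307.6293 — 5 statements merged into one kernel-verified Lean document; each statement's English description precedes it below -/
import Mathlib

section
/- At an interior minimum point y* of the function y ↦ ∑ⱼ cⱼ(Xⱼ, y), where each cⱼ is semi-concave in y, each individual function y ↦ cⱼ(Xⱼ, y) is differentiable at y*, and ∑ⱼ D_y cⱼ(Xⱼ, y*) = 0. -/
set_option maxHeartbeats 1000000

open Set Asymptotics Finset

lemma exists_subgradient {E : Type*} [NormedAddCommGroup E] [NormedSpace ℝ E]
    [FiniteDimensional ℝ E] {U : Set E} (hU : IsOpen U) {g : E → ℝ}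
    (hg : ConvexOn ℝ U g) {x : E} (hx : x ∈ U) :
    ∃ p : E →L[ℝ] ℝ, ∀ y ∈ U, g x + p (y - x) ≤ g y := by
  set S : Set (E × ℝ) := {q : E × ℝ | q.1 ∈ U ∧ g q.1 < q.2} with hS
  have hSconv : Convex ℝ S := hg.convex_strict_epigraph
  have hgc : ContinuousOn g U := hg.continuousOn hU
  have hSopen : IsOpen S := by
    have hF : ContinuousOn (fun q : E × ℝ => q.2 - g q.1) (U ×ˢ (univ : Set ℝ)) := by
      apply ContinuousOn.sub
      · exact continuous_snd.continuousOn
      · exact hgc.comp continuous_fst.continuousOn (fun q hq => hq.1)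
    have : S = (U ×ˢ (univ : Set ℝ)) ∩ (fun q : E × ℝ => q.2 - g q.1) ⁻¹' (Ioi 0) := by
      ext q; simp [hS, sub_pos, and_comm]
    rw [this]
    exact hF.isOpen_inter_preimage (hU.prod isOpen_univ) isOpen_Ioi
  have hxS : (x, g x) ∉ S := fun h => lt_irrefl _ h.2
  obtain ⟨ℓ, hℓ⟩ := geometric_hahn_banach_open_point hSconv hSopen hxS
  set c : ℝ := ℓ (0, 1) with hc
  have hdec : ∀ (y : E) (t : ℝ), ℓ (y, t) = ℓ (y, 0) + t * c := by
    intro y t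
    have : (y, t) = (y, (0:ℝ)) + t • ((0:E), (1:ℝ)) := by simp
    rw [this, map_add, map_smul, smul_eq_mul]
  have hcneg : c < 0 := by
    have h1 := hℓ (x, g x + 1) ⟨hx, show g x < g x + 1 by linarith⟩
    rw [hdec x (g x + 1), hdec x (g x)] at h1
    linarith
  have key : ∀ y ∈ U, ℓ (y, 0) + g y * c ≤ ℓ (x, 0) + g x * c := by
    intro y hy
    by_contra hcon
    push_neg at hcon
    set ε : ℝ := (ℓ (y, 0) + g y * c - (ℓ (x, 0) + g x * c)) / (-c) with hε
    have hεpos : 0 < ε := by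
      apply div_pos (by linarith) (by linarith)
    have h2 := hℓ (y, g y + ε) ⟨hy, show g y < g y + ε by linarith⟩
    rw [hdec y (g y + ε), hdec x (g x)] at h2
    have hεc : ε * (-c) = ℓ (y, 0) + g y * c - (ℓ (x, 0) + g x * c) := by
      rw [hε, div_mul_cancel₀ _ (by linarith : (-c) ≠ 0)]
    nlinarith
  refine ⟨(-c)⁻¹ • (ℓ.comp (ContinuousLinearMap.inl ℝ E ℝ)), fun y hy => ?_⟩
  have hk := key y hy
  have hcpos : 0 < -c := by linarith
  simp only [ContinuousLinearMap.smul_apply, ContinuousLinearMap.comp_apply,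
    ContinuousLinearMap.inl_apply, smul_eq_mul]
  have hsub : ℓ ((y - x), 0) = ℓ (y, 0) - ℓ (x, 0) := by
    have : ((y - x : E), (0:ℝ)) = (y, (0:ℝ)) - (x, 0) := by simp
    rw [this, map_sub]
  rw [hsub, inv_mul_eq_div]
  have h4 : (ℓ (y, 0) - ℓ (x, 0)) / (-c) ≤ g y - g x := by
    rw [div_le_iff₀ hcpos]
    nlinarith
  linarith

lemma linfun_eq_zero {E : Type*} [NormedAddCommGroup E] [NormedSpace ℝ E]
    (p : E →L[ℝ] ℝ) (M δ : ℝ) (hM : 0 ≤ M) (hδ : 0 < δ)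
    (h : ∀ v : E, ‖v‖ < δ → -(M * ‖v‖ ^ 2) ≤ p v) : p = 0 := by
  ext v
  simp only [ContinuousLinearMap.zero_apply]
  rcases eq_or_ne v 0 with rfl | hv
  · simp
  have hvn : 0 < ‖v‖ := norm_pos_iff.mpr hv
  have key : ∀ t : ℝ, 0 < t → t < δ / ‖v‖ → |p v| ≤ M * ‖v‖ ^ 2 * t := by
    intro t ht htδ
    have hnorm : ‖t • v‖ = t * ‖v‖ := by rw [norm_smul, Real.norm_eq_abs, abs_of_pos ht]
    have hlt : ‖t • v‖ < δ := by rw [hnorm]; rw [lt_div_iff₀ hvn] at htδ; linarith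
    have h1 := h (t • v) hlt
    have h2 := h (-(t • v)) (by rwa [norm_neg])
    rw [map_smul, smul_eq_mul, hnorm] at h1
    rw [map_neg, map_smul, smul_eq_mul, norm_neg, hnorm] at h2
    rw [abs_le]
    constructor <;> nlinarith
  by_contra hne
  have habs : 0 < |p v| := abs_pos.mpr hne
  set t : ℝ := min (δ / ‖v‖ / 2) (|p v| / (2 * (M * ‖v‖ ^ 2 + 1))) with hts
  have ht1 : 0 < t := lt_min (by positivity) (by positivity)
  have ht2 : t < δ / ‖v‖ := lt_of_le_of_lt (min_le_left _ _) (by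
    have : 0 < δ / ‖v‖ := by positivity
    linarith)
  have hk := key t ht1 ht2
  have ht3 : t ≤ |p v| / (2 * (M * ‖v‖ ^ 2 + 1)) := min_le_right _ _
  have hpos : 0 < 2 * (M * ‖v‖ ^ 2 + 1) := by positivity
  rw [le_div_iff₀ hpos] at ht3
  nlinarith [sq_nonneg ‖v‖]

lemma normsq_isLittleO {E : Type*} [NormedAddCommGroup E] :
    (fun h : E => ‖h‖ ^ 2) =o[nhds 0] fun h : E => h := by
  rw [Asymptotics.isLittleO_iff]
  intro c hc
  filter_upwards [Metric.ball_mem_nhds (0 : E) hc] with h hh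
  rw [Metric.mem_ball, dist_zero_right] at hh
  rw [Real.norm_eq_abs, abs_of_nonneg (by positivity)]
  nlinarith [norm_nonneg h]

/-- At an interior minimum of a sum of semi-concave functions, each summand is
differentiable and the derivatives sum to zero. -/
theorem semiconcave_sum_differentiable_at_min
    {n k : ℕ} (U : Set (EuclideanSpace ℝ (Fin n))) (hU : IsOpen U)
    (f : Fin k → EuclideanSpace ℝ (Fin n) → ℝ) (C : ℝ)
    (hsc : ∀ j, ConcaveOn ℝ U fun y => f j y - C * ‖y‖ ^ 2)
    (ystar : EuclideanSpace ℝ (Fin n)) (hy : ystar ∈ U)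
    (hmin : ∀ y ∈ U, ∑ j, f j ystar ≤ ∑ j, f j y) :
    (∀ j, DifferentiableAt ℝ (f j) ystar) ∧
      ∑ j, fderiv ℝ (f j) ystar = 0 := by
  classical
  rcases Nat.eq_zero_or_pos k with rfl | hk1
  · exact ⟨fun j => j.elim0, by simp⟩
  have hkR : (1 : ℝ) ≤ (k : ℝ) := by exact_mod_cast hk1
  have hconv : ∀ j, ConvexOn ℝ U (fun y => C * ‖y‖ ^ 2 - f j y) := by
    intro j
    have h2 := (hsc j).neg
    simp only [Pi.neg_def, neg_sub] at h2
    exact h2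
  choose p hp using fun j => exists_subgradient hU (hconv j) hy
  set q : Fin k → EuclideanSpace ℝ (Fin n) →L[ℝ] ℝ :=
    fun j => (2 * C) • (innerSL ℝ ystar) - p j with hqdef
  -- upper bound for each summand
  have hub : ∀ j, ∀ y ∈ U, f j y ≤ f j ystar + q j (y - ystar) + C * ‖y - ystar‖ ^ 2 := by
    intro j y hyU
    have h1 := hp j y hyU
    have h2 : ‖y‖ ^ 2 = ‖ystar‖ ^ 2 + 2 * (inner ℝ ystar (y - ystar) : ℝ) + ‖y - ystar‖ ^ 2 := by
      have hxy : ystar + (y - ystar) = y := by abel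
      have := norm_add_sq_real ystar (y - ystar)
      rw [hxy] at this
      linarith
    have h3 : q j (y - ystar) = 2 * C * (inner ℝ ystar (y - ystar) : ℝ) - p j (y - ystar) := by
      simp [hqdef, mul_comm, mul_assoc]
    rw [h2] at h1
    rw [h3]
    linarith
  obtain ⟨δ, hδ, hball⟩ := Metric.isOpen_iff.mp hU ystar hy
  have hmem : ∀ v : EuclideanSpace ℝ (Fin n), ‖v‖ < δ → ystar + v ∈ U := by
    intro v hv
    apply hball
    rw [Metric.mem_ball, dist_eq_norm]
    simpa using hv
  -- the sum of the q j vanishes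
  have hQ0 : (∑ j, q j) = 0 := by
    apply linfun_eq_zero _ ((k : ℝ) * |C|) δ (by positivity) hδ
    intro v hv
    have hyv := hmem v hv
    have hsum : ∑ j, f j (ystar + v) ≤ ∑ j, (f j ystar + q j v + C * ‖v‖ ^ 2) := by
      apply Finset.sum_le_sum
      intro j _
      have := hub j (ystar + v) hyv
      rwa [add_sub_cancel_left] at this
    have hmin' := hmin (ystar + v) hyv
    have hexp : ∑ j, (f j ystar + q j v + C * ‖v‖ ^ 2)
        = ∑ j, f j ystar + (∑ j, q j) v + (k : ℝ) * (C * ‖v‖ ^ 2) := by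
      rw [Finset.sum_add_distrib, Finset.sum_add_distrib, ContinuousLinearMap.sum_apply]
      simp [Finset.sum_const, nsmul_eq_mul]
    have hCabs : (k : ℝ) * (C * ‖v‖ ^ 2) ≤ (k : ℝ) * |C| * ‖v‖ ^ 2 := by
      have : C * ‖v‖ ^ 2 ≤ |C| * ‖v‖ ^ 2 := by
        apply mul_le_mul_of_nonneg_right (le_abs_self C) (by positivity)
      nlinarith [this, Nat.cast_nonneg (α := ℝ) k]
    rw [hexp] at hsum
    linarith
  -- each f j has derivative q j
  have hder : ∀ j, HasFDerivAt (f j) (q j) ystar := by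
    intro j
    rw [hasFDerivAt_iff_isLittleO_nhds_zero]
    have hbig : (fun h => f j (ystar + h) - f j ystar - q j h)
        =O[nhds 0] fun h : EuclideanSpace ℝ (Fin n) => ‖h‖ ^ 2 := by
      rw [Asymptotics.isBigO_iff]
      refine ⟨(k : ℝ) * |C|, ?_⟩
      filter_upwards [Metric.ball_mem_nhds (0 : EuclideanSpace ℝ (Fin n)) hδ] with h hh
      rw [Metric.mem_ball, dist_zero_right] at hh
      have hyh := hmem h hh
      set u : Fin k → ℝ := fun i => f i (ystar + h) - f i ystar - q i h with hu
      have hui : ∀ i, u i ≤ |C| * ‖h‖ ^ 2 := by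
        intro i
        have := hub i (ystar + h) hyh
        rw [add_sub_cancel_left] at this
        have habs : C * ‖h‖ ^ 2 ≤ |C| * ‖h‖ ^ 2 :=
          mul_le_mul_of_nonneg_right (le_abs_self C) (by positivity)
        simp only [hu]
        linarith
      have husum : 0 ≤ ∑ i, u i := by
        have : ∑ i, u i = ∑ i, f i (ystar + h) - ∑ i, f i ystar - (∑ i, q i) h := by
          simp only [hu, ContinuousLinearMap.sum_apply]
          rw [Finset.sum_sub_distrib, Finset.sum_sub_distrib]
        rw [this, hQ0]
        have := hmin (ystar + h) hyh
        simp only [ContinuousLinearMap.zero_apply]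
        linarith
      have hlow : -((k : ℝ) * |C| * ‖h‖ ^ 2) ≤ u j := by
        have herase : ∑ i ∈ Finset.univ.erase j, u i ≤ (k : ℝ) * (|C| * ‖h‖ ^ 2) := by
          calc ∑ i ∈ Finset.univ.erase j, u i
              ≤ ∑ _i ∈ Finset.univ.erase j, |C| * ‖h‖ ^ 2 :=
                Finset.sum_le_sum fun i _ => hui i
            _ = ((Finset.univ.erase j).card : ℝ) * (|C| * ‖h‖ ^ 2) := by
                rw [Finset.sum_const, nsmul_eq_mul]
            _ ≤ (k : ℝ) * (|C| * ‖h‖ ^ 2) := by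
                apply mul_le_mul_of_nonneg_right _ (by positivity)
                have : (Finset.univ.erase j).card ≤ k := by
                  calc (Finset.univ.erase j).card ≤ Finset.univ.card :=
                        Finset.card_le_card (Finset.erase_subset _ _)
                    _ = k := by simp
                exact_mod_cast this
        have hsplit : u j + ∑ i ∈ Finset.univ.erase j, u i = ∑ i, u i :=
          Finset.add_sum_erase _ _ (Finset.mem_univ j)
        nlinarith
      have hhigh : u j ≤ (k : ℝ) * |C| * ‖h‖ ^ 2 := by
        have := hui j
        nlinarith [abs_nonneg C, norm_nonneg h, sq_nonneg ‖h‖]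
      simp only [hu] at hlow hhigh
      rw [Real.norm_eq_abs, Real.norm_eq_abs, abs_of_nonneg (by positivity : (0:ℝ) ≤ ‖h‖ ^ 2)]
      rw [abs_le]
      exact ⟨by linarith, by linarith⟩
    exact hbig.trans_isLittleO normsq_isLittleO
  refine ⟨fun j => (hder j).differentiableAt, ?_⟩
  have hfd : ∀ j, fderiv ℝ (f j) ystar = q j := fun j => (hder j).fderiv
  calc ∑ j, fderiv ℝ (f j) ystar = ∑ j, q j := by
        exact Finset.sum_congr rfl fun j _ => hfd j
    _ = 0 := hQ0
end

section
/- Projection of c-cyclical monotonicity under infimal convolution (Lemma 5.3): let c(X₁,...,X_k) = min_{y∈Y} ∑ⱼ cⱼ(Xⱼ,y). If S ⊆ M₁ × ... × Mₘ is c-cyclically monotone, then the set S̄ := {(X₁, y) : ∃ (X₂,...,X_k) with (X₁,...,X_k) ∈ S and y ∈ argmin_{y'∈Y} ∑ⱼ cⱼ(Xⱼ, y')} is c₁-cyclically monotone, where c₁ is viewed as a cost on M₁ × ... × M_{m₁} × Y. -/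
universe u

/-- c-cyclical monotonicity for a cost on a finite dependent product: each
coordinate slot may be permuted independently. -/
def CMono {ι : Type*} [Fintype ι] {M : ι → Type*} (c : (∀ i, M i) → ℝ)
    (S : Set (∀ i, M i)) : Prop :=
  ∀ (N : ℕ) (x : Fin N → ∀ i, M i), (∀ n, x n ∈ S) →
    ∀ σ : ι → Equiv.Perm (Fin N),
      ∑ n, c (x n) ≤ ∑ n, c (fun i => x (σ i n) i)

/-- The index type for a block of coordinates augmented by the extra variable y. -/
abbrev Aug {ι : Type*} (M : ι → Type u) (Y : Type u) : ι ⊕ Unit → Type u :=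
  fun i' => Sum.elim M (fun _ => Y) i'

/-- Lemma 5.3: for an infimal convolution cost c(X₁,...,X_k) = min_y ∑ⱼ cⱼ(Xⱼ,y),
if S is c-cyclically monotone then the set of (X₁, y) with (X₁,...,X_k) ∈ S and y
a minimizer is c₁-cyclically monotone (c₁ viewed as a cost on the first block
together with Y). -/
theorem cyclical_monotone_projection_first_block
    {m k : ℕ} (hk : 0 < k) {M : Fin m → Type u} {Y : Type u}
    (blk : Fin m → Fin k)
    (cost : ∀ j : Fin k, ((∀ i : {i // blk i = j}, M i.val) → Y → ℝ))
    (c : (∀ i, M i) → ℝ)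
    (hc : ∀ x, IsLeast {v | ∃ y : Y, v = ∑ j, cost j (fun i => x i.val) y} (c x))
    (S : Set (∀ i, M i)) (hS : CMono c S) :
    CMono
      (fun z : ∀ i', Aug (fun i : {i // blk i = (⟨0, hk⟩ : Fin k)} => M i.val) Y i' =>
        cost ⟨0, hk⟩ (fun i => z (Sum.inl i)) (z (Sum.inr ())))
      {z | ∃ x ∈ S, (∀ i : {i // blk i = (⟨0, hk⟩ : Fin k)}, z (Sum.inl i) = x i.val) ∧
        ∀ y' : Y,
          (∑ j', cost j' (fun i => x i.val) (z (Sum.inr ()))) ≤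
            ∑ j', cost j' (fun i => x i.val) y'} := by
  intro N z hz σ
  choose x hxS hxz hxmin using hz
  set π : Equiv.Perm (Fin N) := σ (Sum.inr ()) with hπ
  set τ : Fin m → Equiv.Perm (Fin N) := fun i =>
    if h : blk i = (⟨0, hk⟩ : Fin k) then σ (Sum.inl ⟨i, h⟩) else π with hτ
  have hmono := hS N x hxS τ
  have hcx : ∀ n, c (x n) = ∑ j, cost j (fun i => x n i.val) (z n (Sum.inr ())) := by
    intro n
    obtain ⟨⟨y, hy⟩, hlb⟩ := hc (x n)
    refine le_antisymm (hlb ⟨z n (Sum.inr ()), rfl⟩) ?_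
    rw [hy]; exact hxmin n y
  have hcx' : ∀ n, c (fun i => x (τ i n) i) ≤
      ∑ j, cost j (fun i : {i // blk i = j} => x (τ i.val n) i.val)
        (z (π n) (Sum.inr ())) := by
    intro n
    obtain ⟨-, hlb⟩ := hc (fun i => x (τ i n) i)
    exact hlb ⟨z (π n) (Sum.inr ()), rfl⟩
  have main : ∑ n, ∑ j, cost j (fun i : {i // blk i = j} => x n i.val) (z n (Sum.inr ())) ≤
      ∑ n, ∑ j, cost j (fun i : {i // blk i = j} => x (τ i.val n) i.val)
        (z (π n) (Sum.inr ())) := by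
    calc ∑ n, ∑ j, cost j (fun i : {i // blk i = j} => x n i.val) (z n (Sum.inr ()))
        = ∑ n, c (x n) := by
          exact Finset.sum_congr rfl fun n _ => (hcx n).symm
      _ ≤ ∑ n, c (fun i => x (τ i n) i) := hmono
      _ ≤ _ := Finset.sum_le_sum fun n _ => hcx' n
  have split : ∀ (f : Fin k → ℝ), ∑ j, f j = f (⟨0, hk⟩ : Fin k) + ∑ j ∈ Finset.univ \ {(⟨0, hk⟩ : Fin k)}, f j :=
    fun f => Finset.sum_eq_add_sum_sdiff_singleton_of_mem (Finset.mem_univ (⟨0, hk⟩ : Fin k)) f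
  simp_rw [split, Finset.sum_add_distrib] at main
  have hB : ∑ n, ∑ j ∈ Finset.univ \ {(⟨0, hk⟩ : Fin k)},
      cost j (fun i : {i // blk i = j} => x (τ i.val n) i.val) (z (π n) (Sum.inr ())) =
      ∑ n, ∑ j ∈ Finset.univ \ {(⟨0, hk⟩ : Fin k)},
      cost j (fun i : {i // blk i = j} => x n i.val) (z n (Sum.inr ())) := by
    rw [← Equiv.sum_comp π (fun n => ∑ j ∈ Finset.univ \ {(⟨0, hk⟩ : Fin k)},
      cost j (fun i : {i // blk i = j} => x n i.val) (z n (Sum.inr ())))]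
    refine Finset.sum_congr rfl fun n _ => Finset.sum_congr rfl fun j hj => ?_
    congr 1
    funext i
    have hne : blk i.val ≠ (⟨0, hk⟩ : Fin k) := by
      rw [i.prop]
      simpa using (Finset.mem_sdiff.mp hj).2
    simp [hτ, hne]
  rw [hB] at main
  have main0 : ∑ n, cost (⟨0, hk⟩ : Fin k) (fun i : {i // blk i = (⟨0, hk⟩ : Fin k)} => x n i.val) (z n (Sum.inr ())) ≤
      ∑ n, cost (⟨0, hk⟩ : Fin k) (fun i : {i // blk i = (⟨0, hk⟩ : Fin k)} => x (τ i.val n) i.val)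
        (z (π n) (Sum.inr ())) := le_of_add_le_add_right main
  calc ∑ n, cost (⟨0, hk⟩ : Fin k) (fun i => z n (Sum.inl i)) (z n (Sum.inr ()))
      = ∑ n, cost (⟨0, hk⟩ : Fin k) (fun i : {i // blk i = (⟨0, hk⟩ : Fin k)} => x n i.val) (z n (Sum.inr ())) := by
        refine Finset.sum_congr rfl fun n _ => ?_
        congr 1
        funext i
        exact hxz n i
    _ ≤ ∑ n, cost (⟨0, hk⟩ : Fin k) (fun i : {i // blk i = (⟨0, hk⟩ : Fin k)} => x (τ i.val n) i.val)
        (z (π n) (Sum.inr ())) := main0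
    _ = ∑ n, cost (⟨0, hk⟩ : Fin k) (fun i => z (σ (Sum.inl i) n) (Sum.inl i))
        (z (σ (Sum.inr ()) n) (Sum.inr ())) := by
        refine Finset.sum_congr rfl fun n _ => ?_
        congr 1
        funext i
        have hτi : τ i.val = σ (Sum.inl i) := by
          simp only [hτ, i.prop, dif_pos]
        rw [hτi, hxz (σ (Sum.inl i) n) i]
end

section
/- Two-point exchange inequality forces shared minimizers (key step of Theorem 5.1): let c(X₁,...,X_k) = min_{y∈Y} ∑ⱼ cⱼ(Xⱼ,y). Suppose (X₁, X₂,...,X_k) and (X₁, X̄₂,...,X̄_k) both lie in a c-cyclically monotone set S (same first block X₁), and suppose y ∈ Y satisfies y ∈ argmin ∑ⱼ cⱼ(Xⱼ,·) and y ∈ argmin ∑ⱼ cⱼ(X̄ⱼ,·). Then for every l ∈ {2,...,k}, y is also a minimizer for the mixed point: y ∈ argmin_{y'} [∑_{j≠l} cⱼ(Xⱼ, y') + c_l(X̄_l, y')]. -/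
/-- Two-point exchange inequality forces shared minimizers: if two points of a
c-cyclically monotone set share the same first block and a common minimizer y,
then y also minimizes each mixed sum obtained by swapping one block. -/
theorem shared_minimizer_of_two_point_exchange
    {k : ℕ} [NeZero k] {B : Fin k → Type*} {Y : Type*}
    (cost : ∀ j, B j → Y → ℝ) (c : (∀ j, B j) → ℝ)
    (hc : ∀ X, IsLeast {v | ∃ y : Y, v = ∑ j, cost j (X j) y} (c X))
    (S : Set (∀ j, B j)) (hS : CMono c S)
    (X Xbar : ∀ j, B j) (hX : X ∈ S) (hXbar : Xbar ∈ S)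
    (hfirst : X 0 = Xbar 0)
    (y : Y)
    (hy : ∀ y', ∑ j, cost j (X j) y ≤ ∑ j, cost j (X j) y')
    (hybar : ∀ y', ∑ j, cost j (Xbar j) y ≤ ∑ j, cost j (Xbar j) y')
    (l : Fin k) (hl : l ≠ 0) :
    ∀ y', ∑ j, cost j (Function.update X l (Xbar l) j) y ≤
      ∑ j, cost j (Function.update X l (Xbar l) j) y' := by
  classical
  set X' : ∀ j, B j := Function.update X l (Xbar l) with hX'
  set X'' : ∀ j, B j := Function.update Xbar l (X l) with hX''
  -- the two mixed sums add up to the two original sums, for any y0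
  have hsum : ∀ y0 : Y, (∑ j, cost j (X' j) y0) + (∑ j, cost j (X'' j) y0)
      = (∑ j, cost j (X j) y0) + (∑ j, cost j (Xbar j) y0) := by
    intro y0
    rw [← Finset.sum_add_distrib, ← Finset.sum_add_distrib]
    refine Finset.sum_congr rfl fun j _ => ?_
    by_cases h : j = l
    · subst h
      simp [hX', hX'', Function.update_self, add_comm]
    · simp [hX', hX'', Function.update_of_ne h]
  -- c X and c Xbar are attained at y
  have hattain : ∀ Z : ∀ j, B j,
      (∀ y', ∑ j, cost j (Z j) y ≤ ∑ j, cost j (Z j) y') →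
      c Z = ∑ j, cost j (Z j) y := by
    intro Z hZ
    obtain ⟨⟨y0, hy0⟩, hlb⟩ := hc Z
    have h1 : c Z ≤ ∑ j, cost j (Z j) y := hlb ⟨y, rfl⟩
    have h2 : ∑ j, cost j (Z j) y ≤ c Z := hy0 ▸ hZ y0
    linarith
  have hcX : c X = ∑ j, cost j (X j) y := hattain X hy
  have hcXbar : c Xbar = ∑ j, cost j (Xbar j) y := hattain Xbar hybar
  -- apply c-cyclical monotonicity with N = 2 and a swap at coordinate l
  have hmono := hS 2 ![X, Xbar] (by intro n; fin_cases n <;> simpa)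
    (fun i => if i = l then Equiv.swap 0 1 else 1)
  have e0 : (fun i => ![X, Xbar] ((if i = l then Equiv.swap (0 : Fin 2) 1 else 1) 0) i) = X' := by
    funext i
    by_cases h : i = l
    · subst h; simp [hX', Function.update_self]
    · simp [h, hX', Function.update_of_ne h]
  have e1 : (fun i => ![X, Xbar] ((if i = l then Equiv.swap (0 : Fin 2) 1 else 1) 1) i) = X'' := by
    funext i
    by_cases h : i = l
    · subst h; simp [hX'', Function.update_self]
    · simp [h, hX'', Function.update_of_ne h]
  rw [Fin.sum_univ_two, Fin.sum_univ_two] at hmono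
  simp only [Matrix.cons_val_zero, Matrix.cons_val_one, Matrix.head_cons] at hmono
  rw [e0, e1] at hmono
  -- conclude
  have h1 : c X' ≤ ∑ j, cost j (X' j) y := (hc X').2 ⟨y, rfl⟩
  have h2 : c X'' ≤ ∑ j, cost j (X'' j) y := (hc X'').2 ⟨y, rfl⟩
  have hkey : ∑ j, cost j (X' j) y = c X' := by
    have := hsum y
    linarith
  intro y'
  have h3 : c X' ≤ ∑ j, cost j (X' j) y' := (hc X').2 ⟨y', rfl⟩
  linarith
end

section
/- Equality of partial gradients at a common minimizer (conclusion (5.4) of Theorem 5.1): under the setting of the previous statement with each cⱼ semi-concave in y and Y an open subset of ℝᵏ, if y is a common interior minimizer of ∑ⱼ cⱼ(Xⱼ,·), of ∑ⱼ cⱼ(X̄ⱼ,·), and of each mixed sum ∑_{j≠l} cⱼ(Xⱼ,·) + c_l(X̄_l,·), then for each l, D_y c_l(X_l, y) = D_y c_l(X̄_l, y) (both derivatives existing). -/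
open Filter Topology Asymptotics Finset

set_option maxHeartbeats 1000000

/-- Supergradient existence for a concave function at a point of an open set,
in finite dimensions. -/
lemma exists_supergradient {E : Type*} [NormedAddCommGroup E] [NormedSpace ℝ E]
    [FiniteDimensional ℝ E]
    {s : Set E} (hs : IsOpen s) {g : E → ℝ} (hg : ConcaveOn ℝ s g)
    {x : E} (hx : x ∈ s) :
    ∃ p : E →L[ℝ] ℝ, ∀ z ∈ s, g z ≤ g x + p (z - x) := by
  have hfc : ConvexOn ℝ s (-g) := hg.neg
  set S : Set (E × ℝ) := {q | q.1 ∈ s ∧ -g q.1 < q.2} with hSdef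
  have hSopen : IsOpen S := by
    rw [isOpen_iff_mem_nhds]
    rintro ⟨z, t⟩ ⟨hz, hzt⟩
    have hca : ContinuousAt (fun q : E × ℝ => q.2 + g q.1) (z, t) := by
      have hgz : ContinuousAt g z :=
        (hg.continuousOn hs).continuousAt (hs.mem_nhds hz)
      exact continuousAt_snd.add (hgz.comp continuousAt_fst)
    have h0 : (0 : ℝ) < t + g z := by
      simp only [Set.mem_setOf_eq] at hzt; linarith
    have h1 : ∀ᶠ q : E × ℝ in 𝓝 (z, t), q.1 ∈ s :=
      continuousAt_fst.eventually_mem (hs.mem_nhds hz)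
    have h2 : ∀ᶠ q : E × ℝ in 𝓝 (z, t), 0 < q.2 + g q.1 :=
      hca.eventually (eventually_gt_nhds h0)
    filter_upwards [h1, h2] with q hq1 hq2
    exact ⟨hq1, by linarith⟩
  have hSconv : Convex ℝ S := by
    rintro ⟨z1, t1⟩ ⟨hz1, ht1⟩ ⟨z2, t2⟩ ⟨hz2, ht2⟩ a b ha hb hab
    simp only [Set.mem_setOf_eq] at ht1 ht2 ⊢
    refine ⟨hg.1 hz1 hz2 ha hb hab, ?_⟩
    have hcomb := hfc.2 hz1 hz2 ha hb hab
    simp only [Pi.neg_apply, smul_eq_mul] at hcomb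
    have hstrict : a * (-g z1) + b * (-g z2) < a * t1 + b * t2 := by
      rcases eq_or_lt_of_le ha with ha0 | hapos
      · have hb1 : b = 1 := by linarith
        rw [← ha0, hb1]; simpa using ht2
      · have hA : a * (-g z1) < a * t1 := mul_lt_mul_of_pos_left ht1 hapos
        have hB : b * (-g z2) ≤ b * t2 := mul_le_mul_of_nonneg_left ht2.le hb
        linarith
    have hfst : (a • ((z1, t1) : E × ℝ) + b • (z2, t2)).2 = a * t1 + b * t2 := by
      simp [smul_eq_mul]
    rw [hfst]
    calc -g (a • z1 + b • z2) ≤ a * (-g z1) + b * (-g z2) := by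
            simpa [smul_eq_mul] using hcomb
      _ < a * t1 + b * t2 := hstrict
  have hxS : ((x, -g x) : E × ℝ) ∉ S := fun h => lt_irrefl _ h.2
  obtain ⟨φ, hφ⟩ := geometric_hahn_banach_open_point hSconv hSopen hxS
  set c : ℝ := φ (0, 1) with hc
  set L : E →L[ℝ] ℝ := φ.comp (ContinuousLinearMap.inl ℝ E ℝ) with hL
  have hdec : ∀ (z : E) (t : ℝ), φ (z, t) = L z + t * c := by
    intro z t
    have hzt : ((z, t) : E × ℝ) = (z, 0) + t • ((0 : E), (1 : ℝ)) := by
      simp [Prod.ext_iff]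
    rw [hzt, map_add, map_smul]
    simp [hL, hc, smul_eq_mul]
  have key : ∀ z ∈ s, ∀ t, -g z < t → L z + t * c < L x + (-g x) * c := by
    intro z hz t ht
    have h := hφ (z, t) ⟨hz, ht⟩
    rwa [hdec, hdec] at h
  have hcneg : c < 0 := by
    have h := key x hx (-g x + 1) (by linarith)
    nlinarith [h]
  refine ⟨c⁻¹ • L, ?_⟩
  intro z hz
  have h1 : L z + (-g z) * c ≤ L x + (-g x) * c := by
    refine le_of_forall_pos_le_add ?_
    intro ε hε
    have hpos : 0 < ε / (-c) := div_pos hε (by linarith)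
    have h2 := key z hz (-g z + ε / (-c)) (by linarith)
    have hcne : c ≠ 0 := ne_of_lt hcneg
    have h3 : (ε / (-c)) * c = -ε := by
      field_simp
    nlinarith [h2]
  have h4 : -g x - (-g z) ≤ (L z - L x) / c := by
    rw [le_div_iff_of_neg hcneg]
    nlinarith [h1]
  have h5 : (c⁻¹ • L) (z - x) = (L z - L x) / c := by
    rw [ContinuousLinearMap.smul_apply, map_sub, smul_eq_mul, div_eq_inv_mul]
  rw [h5]; linarith

/-- At an interior minimum of a finite sum of semi-concave functions, each summand
is differentiable and the derivatives sum to zero. -/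
lemma key_min {E : Type*} [NormedAddCommGroup E] [InnerProductSpace ℝ E]
    [FiniteDimensional ℝ E]
    {U : Set E} (hU : IsOpen U)
    {ι : Type*} [Fintype ι] [DecidableEq ι] (f : ι → E → ℝ) (C : ℝ)
    (hsc : ∀ i, ConcaveOn ℝ U fun z => f i z - C * ‖z‖ ^ 2)
    {y : E} (hy : y ∈ U)
    (hmin : ∀ z ∈ U, ∑ i, f i y ≤ ∑ i, f i z) :
    ∃ D : ι → (E →L[ℝ] ℝ),
      (∀ i, HasFDerivAt (f i) (D i) y) ∧ ∑ i, D i = 0 := by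
  -- supergradients of the concave parts
  have hp : ∀ i, ∃ p : E →L[ℝ] ℝ, ∀ z ∈ U,
      f i z - C * ‖z‖ ^ 2 ≤ (f i y - C * ‖y‖ ^ 2) + p (z - y) :=
    fun i => exists_supergradient hU (hsc i) hy
  choose p hpspec using hp
  set s : ι → (E →L[ℝ] ℝ) := fun i => p i + (2 * C) • innerSL ℝ y with hsdef
  have hnorm : ∀ z : E, ‖z‖ ^ 2
      = ‖y‖ ^ 2 + 2 * (inner ℝ y (z - y) : ℝ) + ‖z - y‖ ^ 2 := by
    intro z
    have h := norm_add_sq_real y (z - y)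
    have h2 : y + (z - y) = z := by abel
    rw [h2] at h
    exact h
  have hub : ∀ i, ∀ z ∈ U, f i z ≤ f i y + (s i) (z - y) + C * ‖z - y‖ ^ 2 := by
    intro i z hz
    have h1 := hpspec i z hz
    have h2 := hnorm z
    have h3 : (s i) (z - y) = p i (z - y) + 2 * C * (inner ℝ y (z - y) : ℝ) := by
      simp only [hsdef, ContinuousLinearMap.add_apply, ContinuousLinearMap.smul_apply,
        innerSL_apply_apply, smul_eq_mul]
    have h2' : C * ‖z‖ ^ 2 - C * ‖y‖ ^ 2
        = 2 * C * (inner ℝ y (z - y) : ℝ) + C * ‖z - y‖ ^ 2 := by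
      rw [h2]; ring
    rw [h3]; linarith
  set T : E →L[ℝ] ℝ := ∑ i, s i with hTdef
  set n : ℝ := (Fintype.card ι : ℝ) with hn
  -- T = 0
  have hT0 : ∀ h : E, 0 ≤ T h := by
    intro h
    have htend : Tendsto (fun t : ℝ => y + t • h) (𝓝[>] 0) (𝓝 y) := by
      have hc : Continuous (fun t : ℝ => y + t • h) :=
        continuous_const.add (continuous_id.smul continuous_const)
      have := hc.tendsto 0
      simp only [zero_smul, add_zero] at this
      exact this.mono_left nhdsWithin_le_nhds
    have hev : ∀ᶠ t in 𝓝[>] (0:ℝ), y + t • h ∈ U :=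
      htend.eventually_mem (hU.mem_nhds hy)
    have hineq : ∀ᶠ t in 𝓝[>] (0:ℝ), -(n * C * ‖h‖ ^ 2) * t ≤ T h := by
      filter_upwards [hev, self_mem_nhdsWithin] with t htU ht
      have htpos : (0:ℝ) < t := ht
      have h1 : 0 ≤ ∑ i, (f i (y + t • h) - f i y) := by
        have := hmin (y + t • h) htU
        rw [Finset.sum_sub_distrib]; linarith
      have h2 : ∑ i, (f i (y + t • h) - f i y)
          ≤ T (t • h) + n * (C * ‖t • h‖ ^ 2) := by
        have hb : ∀ i ∈ Finset.univ,
            f i (y + t • h) - f i y ≤ s i (t • h) + C * ‖t • h‖ ^ 2 := by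
          intro i _
          have := hub i (y + t • h) htU
          rw [add_sub_cancel_left] at this
          linarith
        calc ∑ i, (f i (y + t • h) - f i y)
            ≤ ∑ i, (s i (t • h) + C * ‖t • h‖ ^ 2) := Finset.sum_le_sum hb
          _ = T (t • h) + n * (C * ‖t • h‖ ^ 2) := by
              rw [Finset.sum_add_distrib, Finset.sum_const, hTdef,
                ContinuousLinearMap.sum_apply]
              simp [hn, nsmul_eq_mul]
      have hns : ‖t • h‖ ^ 2 = t ^ 2 * ‖h‖ ^ 2 := by
        rw [norm_smul, Real.norm_eq_abs, mul_pow, sq_abs]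
      have hTt : T (t • h) = t * T h := by rw [map_smul]; simp [smul_eq_mul]
      rw [hTt, hns] at h2
      have h3 : 0 ≤ t * (T h + n * C * t * ‖h‖ ^ 2) := by nlinarith
      have h4 : 0 ≤ T h + n * C * t * ‖h‖ ^ 2 :=
        nonneg_of_mul_nonneg_right h3 htpos
      nlinarith
    have hlim : Tendsto (fun t : ℝ => -(n * C * ‖h‖ ^ 2) * t) (𝓝[>] (0:ℝ)) (𝓝 0) := by
      have hc : Continuous (fun t : ℝ => -(n * C * ‖h‖ ^ 2) * t) :=
        continuous_const.mul continuous_id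
      have := hc.tendsto 0
      simp only [mul_zero] at this
      exact this.mono_left nhdsWithin_le_nhds
    exact le_of_tendsto hlim hineq
  have hT : T = 0 := by
    ext1 h
    have h1 := hT0 h
    have h2 := hT0 (-h)
    rw [map_neg] at h2
    simp only [ContinuousLinearMap.zero_apply]
    linarith
  -- derivative of each summand
  have hder : ∀ l, HasFDerivAt (f l) (s l) y := by
    intro l
    have hlb : ∀ z ∈ U,
        f l y + s l (z - y) - n * |C| * ‖z - y‖ ^ 2 ≤ f l z := by
      intro z hz
      have h1 : f l y - f l z ≤ ∑ j ∈ Finset.univ.erase l, (f j z - f j y) := by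
        have := hmin z hz
        have hs1 : ∑ j, f j y = f l y + ∑ j ∈ Finset.univ.erase l, f j y :=
          (Finset.add_sum_erase _ _ (Finset.mem_univ l)).symm
        have hs2 : ∑ j, f j z = f l z + ∑ j ∈ Finset.univ.erase l, f j z :=
          (Finset.add_sum_erase _ _ (Finset.mem_univ l)).symm
        rw [hs1, hs2] at this
        rw [Finset.sum_sub_distrib]
        linarith
      have h2 : ∑ j ∈ Finset.univ.erase l, (f j z - f j y)
          ≤ (∑ j ∈ Finset.univ.erase l, s j) (z - y)
            + ((Finset.univ.erase l).card : ℝ) * (C * ‖z - y‖ ^ 2) := by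
        have hb : ∀ j ∈ Finset.univ.erase l,
            f j z - f j y ≤ s j (z - y) + C * ‖z - y‖ ^ 2 := by
          intro j _
          have := hub j z hz; linarith
        calc ∑ j ∈ Finset.univ.erase l, (f j z - f j y)
            ≤ ∑ j ∈ Finset.univ.erase l, (s j (z - y) + C * ‖z - y‖ ^ 2) :=
              Finset.sum_le_sum hb
          _ = _ := by
              rw [Finset.sum_add_distrib, Finset.sum_const,
                ContinuousLinearMap.sum_apply]
              simp [nsmul_eq_mul]
      have h3 : (∑ j ∈ Finset.univ.erase l, s j) (z - y) = -(s l (z - y)) := by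
        have : (∑ j ∈ Finset.univ.erase l, s j) + s l = T := by
          rw [hTdef, ← Finset.sum_erase_add _ _ (Finset.mem_univ l)]
        have h4 : (∑ j ∈ Finset.univ.erase l, s j) = T - s l := by
          rw [← this]; abel
        rw [h4, hT]; simp
      rw [h3] at h2
      have hcard : ((Finset.univ.erase l).card : ℝ) ≤ n := by
        rw [hn]
        exact_mod_cast Finset.card_le_card (Finset.subset_univ _) |>.trans
          (le_of_eq (by simp [Finset.card_univ]))
      have h5 : ((Finset.univ.erase l).card : ℝ) * (C * ‖z - y‖ ^ 2)
          ≤ n * |C| * ‖z - y‖ ^ 2 := by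
        have hC : C * ‖z - y‖ ^ 2 ≤ |C| * ‖z - y‖ ^ 2 :=
          mul_le_mul_of_nonneg_right (le_abs_self C) (sq_nonneg _)
        have he0 : (0:ℝ) ≤ ((Finset.univ.erase l).card : ℝ) := Nat.cast_nonneg _
        calc ((Finset.univ.erase l).card : ℝ) * (C * ‖z - y‖ ^ 2)
            ≤ ((Finset.univ.erase l).card : ℝ) * (|C| * ‖z - y‖ ^ 2) :=
              mul_le_mul_of_nonneg_left hC he0
          _ ≤ n * (|C| * ‖z - y‖ ^ 2) :=
              mul_le_mul_of_nonneg_right hcard (by positivity)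
          _ = n * |C| * ‖z - y‖ ^ 2 := by ring
      linarith
    rw [hasFDerivAt_iff_isLittleO_nhds_zero]
    have hevU : ∀ᶠ h : E in 𝓝 0, y + h ∈ U := by
      have hc : Continuous (fun h : E => y + h) := continuous_const.add continuous_id
      have := hc.tendsto 0
      simp only [add_zero] at this
      exact this.eventually_mem (hU.mem_nhds hy)
    set M : ℝ := n * |C| + |C| with hM
    have hbig : (fun h => f l (y + h) - f l y - s l h)
        =O[𝓝 (0:E)] fun h => ‖h‖ * ‖h‖ := by
      rw [isBigO_iff]
      refine ⟨M, ?_⟩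
      filter_upwards [hevU] with h hh
      have hu := hub l (y + h) hh
      rw [add_sub_cancel_left] at hu
      have hl := hlb (y + h) hh
      rw [add_sub_cancel_left] at hl
      have h0n : (0:ℝ) ≤ n := by rw [hn]; positivity
      have hQ0 : (0:ℝ) ≤ ‖h‖ * ‖h‖ := mul_nonneg (norm_nonneg _) (norm_nonneg _)
      have hMn : n * |C| ≤ M := by rw [hM]; linarith [abs_nonneg C]
      have hMC : C ≤ M := by
        rw [hM]; linarith [le_abs_self C, mul_nonneg h0n (abs_nonneg C)]
      rw [pow_two] at hu hl
      have habs : |f l (y + h) - f l y - s l h| ≤ M * (‖h‖ * ‖h‖) := by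
        rw [abs_le]
        constructor
        · have := mul_le_mul_of_nonneg_right hMn hQ0
          linarith
        · have := mul_le_mul_of_nonneg_right hMC hQ0
          linarith
      calc ‖f l (y + h) - f l y - s l h‖
          = |f l (y + h) - f l y - s l h| := Real.norm_eq_abs _
        _ ≤ M * (‖h‖ * ‖h‖) := habs
        _ ≤ M * ‖‖h‖ * ‖h‖‖ := by
            rw [Real.norm_eq_abs, abs_of_nonneg (mul_nonneg (norm_nonneg _) (norm_nonneg _))]
    have hlit : (fun h : E => ‖h‖ * ‖h‖) =o[𝓝 (0:E)] fun h => h := by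
      rw [isLittleO_iff]
      intro c hc
      have hball : ∀ᶠ h : E in 𝓝 0, ‖h‖ ≤ c := by
        filter_upwards [Metric.closedBall_mem_nhds (0:E) hc] with h hh
        simpa [Metric.mem_closedBall, dist_zero_right] using hh
      filter_upwards [hball] with h hh
      have : ‖‖h‖ * ‖h‖‖ = ‖h‖ * ‖h‖ := by
        rw [Real.norm_eq_abs, abs_of_nonneg (mul_nonneg (norm_nonneg _) (norm_nonneg _))]
      rw [this]
      exact mul_le_mul_of_nonneg_right hh (norm_nonneg _)
    exact hbig.trans_isLittleO hlit
  exact ⟨s, hder, hT⟩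

/-- Equality of partial gradients at a common minimizer: if y is a common interior
minimizer of the two sums and of each mixed sum, then for each block l the
y-derivatives of cost l at X l and X̄ l exist and coincide. -/
theorem gradients_equal_at_common_minimizer
    {k d : ℕ} [NeZero k] {B : Fin k → Type*}
    (U : Set (EuclideanSpace ℝ (Fin d))) (hU : IsOpen U)
    (cost : ∀ j, B j → EuclideanSpace ℝ (Fin d) → ℝ) (C : ℝ)
    (X Xbar : ∀ j, B j) (hfirst : X 0 = Xbar 0)
    (hsc : ∀ j, ConcaveOn ℝ U fun y => cost j (X j) y - C * ‖y‖ ^ 2)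
    (hscbar : ∀ j, ConcaveOn ℝ U fun y => cost j (Xbar j) y - C * ‖y‖ ^ 2)
    (y : EuclideanSpace ℝ (Fin d)) (hyU : y ∈ U)
    (hy : ∀ y' ∈ U, ∑ j, cost j (X j) y ≤ ∑ j, cost j (X j) y')
    (hybar : ∀ y' ∈ U, ∑ j, cost j (Xbar j) y ≤ ∑ j, cost j (Xbar j) y')
    (hmix : ∀ l, ∀ y' ∈ U,
      ∑ j, cost j (Function.update X l (Xbar l) j) y ≤
        ∑ j, cost j (Function.update X l (Xbar l) j) y') :
    ∀ l, DifferentiableAt ℝ (fun s => cost l (X l) s) y ∧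
      DifferentiableAt ℝ (fun s => cost l (Xbar l) s) y ∧
      fderiv ℝ (fun s => cost l (X l) s) y = fderiv ℝ (fun s => cost l (Xbar l) s) y := by
  intro l
  obtain ⟨D, hD, hDs⟩ := key_min hU (fun j s => cost j (X j) s) C hsc hyU hy
  have hsc' : ∀ j, ConcaveOn ℝ U
      fun z => cost j (Function.update X l (Xbar l) j) z - C * ‖z‖ ^ 2 := by
    intro j
    rcases eq_or_ne j l with rfl | hne
    · simpa only [Function.update_self] using hscbar j
    · simpa only [Function.update_of_ne hne] using hsc j
  obtain ⟨D', hD', hDs'⟩ := key_min hU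
    (fun j s => cost j (Function.update X l (Xbar l) j) s) C hsc' hyU (hmix l)
  have hD'l : HasFDerivAt (fun s => cost l (Xbar l) s) (D' l) y := by
    simpa only [Function.update_self] using hD' l
  have hjj : ∀ j ∈ Finset.univ.erase l, D j = D' j := by
    intro j hj
    have hne : j ≠ l := Finset.ne_of_mem_erase hj
    refine (hD j).unique ?_
    simpa only [Function.update_of_ne hne] using hD' j
  have hsum1 : D l + ∑ j ∈ Finset.univ.erase l, D j = 0 := by
    rw [Finset.add_sum_erase _ _ (Finset.mem_univ l)]; exact hDs
  have hsum2 : D' l + ∑ j ∈ Finset.univ.erase l, D' j = 0 := by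
    rw [Finset.add_sum_erase _ _ (Finset.mem_univ l)]; exact hDs'
  have hDl : D l = D' l := by
    have h1 : D l = -(∑ j ∈ Finset.univ.erase l, D j) :=
      eq_neg_of_add_eq_zero_left hsum1
    have h2 : D' l = -(∑ j ∈ Finset.univ.erase l, D' j) :=
      eq_neg_of_add_eq_zero_left hsum2
    rw [h1, h2, Finset.sum_congr rfl hjj]
  refine ⟨(hD l).differentiableAt, hD'l.differentiableAt, ?_⟩
  rw [(hD l).fderiv, hD'l.fderiv, hDl]
end

section
/- Monge structure on slices (core of Theorem 3.1): assume c : M₁ × ... × Mₘ → ℝ is continuous, semi-concave, and twisted on splitting sets; let γ be an optimal plan with c-conjugate splitting functions (u₁,...,uₘ). If x₁ ∈ M₁ is a point where u₁ is differentiable, then the set S = supp γ ∩ ({x₁} × M₂ × ... × Mₘ) contains at most one point; moreover at any point of S, c is differentiable in x₁ and D_{x₁}c(x₁,x₂,...,xₘ) = Du₁(x₁). -/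
open MeasureTheory

/-- The (topological) support of a measure: points all of whose open neighbourhoods
have positive measure. -/
def measureSupport {α : Type*} [TopologicalSpace α] [MeasurableSpace α]
    (γ : Measure α) : Set α :=
  {p | ∀ U : Set α, IsOpen U → p ∈ U → 0 < γ U}

/-- A c-splitting set: a set on which some potentials u, v₁,...,vₘ with
u(x₁) + ∑ᵢ vᵢ(xᵢ) ≤ c achieve equality. -/
def IsSplittingSet {E : Type*} {ι : Type*} [Fintype ι] {M : ι → Type*}
    (c : E × (∀ i, M i) → ℝ) (S : Set (E × ∀ i, M i)) : Prop :=
  ∃ (u : E → ℝ) (v : ∀ i, M i → ℝ),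
    (∀ p, u p.1 + ∑ i, v i (p.2 i) ≤ c p) ∧
    (∀ p ∈ S, u p.1 + ∑ i, v i (p.2 i) = c p)

open Asymptotics Filter

/-- A function satisfying the midpoint concavity inequality that is touched from
below at a point by a function differentiable there is itself differentiable
there, with the same derivative. -/
lemma concave_squeeze {E : Type*} [NormedAddCommGroup E] [NormedSpace ℝ E]
    {φ ψ : E → ℝ} {x₁ : E} {L : E →L[ℝ] ℝ}
    (hmid : ∀ h : E, φ (x₁ + h) + φ (x₁ - h) ≤ 2 * φ x₁)
    (hlow : ∀ x, ψ x ≤ φ x) (heq : ψ x₁ = φ x₁)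
    (hψ : HasFDerivAt ψ L x₁) : HasFDerivAt φ L x₁ := by
  rw [hasFDerivAt_iff_isLittleO_nhds_zero] at hψ ⊢
  rw [isLittleO_iff] at hψ ⊢
  intro ε hε
  have h1 := hψ hε
  have hneg : Tendsto (fun h : E => -h) (nhds 0) (nhds 0) := by
    simpa using (continuous_neg.tendsto (0 : E))
  have h2 : ∀ᶠ h in nhds (0 : E), ‖ψ (x₁ - h) - ψ x₁ + L h‖ ≤ ε * ‖h‖ := by
    filter_upwards [hneg.eventually (hψ hε)] with h hh
    simpa [sub_eq_add_neg, norm_neg] using hh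
  filter_upwards [h1, h2] with h hh1 hh2
  rw [Real.norm_eq_abs] at hh1 hh2 ⊢
  rw [abs_le] at hh1 hh2 ⊢
  constructor
  · have := hlow (x₁ + h)
    linarith [hh1.1]
  · have hm := hmid h
    have := hlow (x₁ - h)
    linarith [hh2.1]

/-- Monge structure on slices (core of Theorem 3.1): if c is twisted on splitting
sets, (u₁, v) are c-conjugate splitting functions for supp γ, and u₁ is
differentiable at x₁, then the slice of supp γ over x₁ contains at most one point,
and at any point of the slice c is differentiable in x₁ with derivative Du₁(x₁). -/
theorem monge_structure_on_slices
    {n : ℕ} {ι : Type*} [Fintype ι] {M : ι → Type*}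
    [∀ i, MetricSpace (M i)] [∀ i, CompactSpace (M i)] [∀ i, Nonempty (M i)]
    [∀ i, MeasurableSpace (M i)] [∀ i, BorelSpace (M i)]
    (c : EuclideanSpace ℝ (Fin n) × (∀ i, M i) → ℝ) (hcont : Continuous c)
    (C : ℝ)
    (hsc : ∀ z : ∀ i, M i,
      ConcaveOn ℝ Set.univ fun x : EuclideanSpace ℝ (Fin n) => c (x, z) - C * ‖x‖ ^ 2)
    (htwist : ∀ x₁ : EuclideanSpace ℝ (Fin n),
      ∀ S : Set (EuclideanSpace ℝ (Fin n) × ∀ i, M i), S ⊆ {p | p.1 = x₁} →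
      IsSplittingSet c S →
      ∀ p ∈ S, ∀ q ∈ S,
        DifferentiableAt ℝ (fun x => c (x, p.2)) x₁ →
        DifferentiableAt ℝ (fun x => c (x, q.2)) x₁ →
        fderiv ℝ (fun x => c (x, p.2)) x₁ = fderiv ℝ (fun x => c (x, q.2)) x₁ →
        p = q)
    (γ : Measure (EuclideanSpace ℝ (Fin n) × ∀ i, M i)) [IsProbabilityMeasure γ]
    (u₁ : EuclideanSpace ℝ (Fin n) → ℝ) (v : ∀ i, M i → ℝ)
    (hle : ∀ p, u₁ p.1 + ∑ i, v i (p.2 i) ≤ c p)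
    (heq : ∀ p ∈ measureSupport γ, u₁ p.1 + ∑ i, v i (p.2 i) = c p)
    (hconj : ∀ x, u₁ x = ⨅ z : ∀ i, M i, (c (x, z) - ∑ i, v i (z i)))
    (x₁ : EuclideanSpace ℝ (Fin n)) (hdiff : DifferentiableAt ℝ u₁ x₁) :
    (∀ p ∈ measureSupport γ, ∀ q ∈ measureSupport γ, p.1 = x₁ → q.1 = x₁ → p = q) ∧
    (∀ p ∈ measureSupport γ, p.1 = x₁ →
      DifferentiableAt ℝ (fun x => c (x, p.2)) x₁ ∧
      fderiv ℝ (fun x => c (x, p.2)) x₁ = fderiv ℝ u₁ x₁) := by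
  -- differentiability of the quadratic part
  have hqdiff : DifferentiableAt ℝ
      (fun x : EuclideanSpace ℝ (Fin n) => C * ‖x‖ ^ 2) x₁ := by
    have h := (differentiableAt_id (x := x₁)).inner ℝ (differentiableAt_id (x := x₁))
    have e : (fun x : EuclideanSpace ℝ (Fin n) => ‖x‖ ^ 2)
        = fun x => (inner ℝ x x : ℝ) := by
      funext x; rw [real_inner_self_eq_norm_sq]
    have : DifferentiableAt ℝ (fun x : EuclideanSpace ℝ (Fin n) => ‖x‖ ^ 2) x₁ := by
      rw [e]; exact h
    exact this.const_mul C
  set Lq := fderiv ℝ (fun x : EuclideanSpace ℝ (Fin n) => C * ‖x‖ ^ 2) x₁ with hLq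
  have hq : HasFDerivAt (fun x : EuclideanSpace ℝ (Fin n) => C * ‖x‖ ^ 2) Lq x₁ :=
    hqdiff.hasFDerivAt
  -- the key derivative claim
  have key : ∀ p ∈ measureSupport γ, p.1 = x₁ →
      HasFDerivAt (fun x => c (x, p.2)) (fderiv ℝ u₁ x₁) x₁ := by
    rintro ⟨a, z⟩ hp rfl
    set x₁ := a
    -- concave part
    set φ : EuclideanSpace ℝ (Fin n) → ℝ := fun x => c (x, z) - C * ‖x‖ ^ 2 with hφ
    set ψ : EuclideanSpace ℝ (Fin n) → ℝ :=
      fun x => u₁ x + ∑ i, v i (z i) - C * ‖x‖ ^ 2 with hψ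
    have hmid : ∀ h, φ (x₁ + h) + φ (x₁ - h) ≤ 2 * φ x₁ := by
      intro h
      have hc := (hsc z).2 (Set.mem_univ (x₁ + h)) (Set.mem_univ (x₁ - h))
        (by norm_num : (0:ℝ) ≤ 1/2) (by norm_num : (0:ℝ) ≤ 1/2) (by norm_num)
      have hpt : (1/2 : ℝ) • (x₁ + h) + (1/2 : ℝ) • (x₁ - h) = x₁ := by
        module
      rw [hpt] at hc
      simp only [smul_eq_mul] at hc
      dsimp only [φ]
      linarith
    have hlow : ∀ x, ψ x ≤ φ x := by
      intro x
      have := hle (x, z)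
      dsimp only [φ, ψ]
      simpa using by linarith [hle (x, z)]
    have heq1 : ψ x₁ = φ x₁ := by
      have := heq (x₁, z) hp
      dsimp only [φ, ψ]
      simpa using by linarith [heq (x₁, z) hp]
    have hψd : HasFDerivAt ψ (fderiv ℝ u₁ x₁ - Lq) x₁ := by
      exact ((hdiff.hasFDerivAt.add_const _).sub hq)
    have hφd : HasFDerivAt φ (fderiv ℝ u₁ x₁ - Lq) x₁ :=
      concave_squeeze hmid hlow heq1 hψd
    have : HasFDerivAt (fun x => c (x, z)) (fderiv ℝ u₁ x₁ - Lq + Lq) x₁ := by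
      have := hφd.add hq
      refine (congrArg (HasFDerivAt · _ x₁) ?_).mpr this
      funext x
      dsimp only [φ, Pi.add_apply]
      ring
    simpa using this
  constructor
  · intro p hp q hq hp1 hq1
    set S : Set (EuclideanSpace ℝ (Fin n) × ∀ i, M i) :=
      measureSupport γ ∩ {r | r.1 = x₁} with hS
    have hsplit : IsSplittingSet c S :=
      ⟨u₁, v, hle, fun r hr => heq r hr.1⟩
    have kp := key p hp hp1
    have kq := key q hq hq1
    exact htwist x₁ S (fun r hr => hr.2) hsplit p ⟨hp, hp1⟩ q ⟨hq, hq1⟩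
      kp.differentiableAt kq.differentiableAt (by rw [kp.fderiv, kq.fderiv])
  · intro p hp hp1
    have k := key p hp hp1
    exact ⟨k.differentiableAt, k.fderiv⟩
end
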